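/- arXiv:1507.05065 — 2 statements merged into one kernel-verified Lean document; each statement's English description precedes it below -/
import Mathlib

section
/- Block determinant on the torus: For every d≥1, n≥1, every p∈𝒢^d_n, and translation-invariant weights x=(x_1,…,x_d) with x_i ≠ ±1 for all i, det(Id − Λ̂^d_n(p)) = [1 + 2·Σ_{i=1}^d x_i·(x_i − cos(2πp_i/n))/(1 − x_i²)] · ∏_{i=1}^d (1 − x_i²), where Id is the 2d-dimensional identity matrix. -/
open scoped Matrix


noncomputable section

/-- The Fourier block `Λ̂^d_n(p)`: the `2d × 2d` complex matrix indexed by the signed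
unit direction vectors `(j, s)` (direction `j ∈ Fin d`, sign `s : Bool`, `true` = `+`),
with entry `x_j · exp((2πi/n) p·v)` between `v` and `u` whenever `u ≠ -v`,
and `0` otherwise. Momenta `p ∈ 𝒢^d_n` are represented as elements of `Fin d → Fin n`. -/
def hatLambda (d n : ℕ) (x : Fin d → ℝ) (p : Fin d → Fin n) :
    Matrix (Fin d × Bool) (Fin d × Bool) ℂ := fun v u =>
  if u = (v.1, !v.2) then 0
  else (x v.1 : ℂ) *
    Complex.exp (2 * Real.pi * Complex.I * ((p v.1 : ℕ) : ℂ) *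
      (if v.2 then 1 else -1) / (n : ℂ))

namespace BlockDetAux

variable (d n : ℕ) (x : Fin d → ℝ) (p : Fin d → Fin n)

/-- The entry value `a_v = x_j e^{±iθ_j}`. -/
def av (v : Fin d × Bool) : ℂ :=
  (x v.1 : ℂ) * Complex.exp (2 * Real.pi * Complex.I * ((p v.1 : ℕ) : ℂ) *
      (if v.2 then 1 else -1) / (n : ℂ))

lemma av_mul_av_swap (j : Fin d) (s : Bool) :
    av d n x p (j, s) * av d n x p (j, !s) = (x j : ℂ) ^ 2 := by
  simp only [av]
  rw [show ((x j : ℂ) * Complex.exp (2 * Real.pi * Complex.I * ((p j : ℕ) : ℂ) *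
      (if s then 1 else -1) / (n : ℂ))) * ((x j : ℂ) * Complex.exp (2 * Real.pi * Complex.I *
      ((p j : ℕ) : ℂ) * (if (!s) then 1 else -1) / (n : ℂ))) =
      (x j : ℂ) ^ 2 * (Complex.exp (2 * Real.pi * Complex.I * ((p j : ℕ) : ℂ) *
      (if s then 1 else -1) / (n : ℂ)) * Complex.exp (2 * Real.pi * Complex.I *
      ((p j : ℕ) : ℂ) * (if (!s) then 1 else -1) / (n : ℂ))) from by ring]
  rw [← Complex.exp_add]
  have : 2 * Real.pi * Complex.I * ((p j : ℕ) : ℂ) * (if s then 1 else -1) / (n : ℂ) +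
      2 * Real.pi * Complex.I * ((p j : ℕ) : ℂ) * (if (!s) then 1 else -1) / (n : ℂ) = 0 := by
    cases s <;> simp <;> ring
  rw [this, Complex.exp_zero, mul_one]

/-- Off-diagonal involution part. -/
def Nmat : Matrix (Fin d × Bool) (Fin d × Bool) ℂ :=
  Matrix.of fun v u => if u = (v.1, !v.2) then av d n x p v else 0

/-- Explicit inverse of `1 + Nmat`. -/
def Minv : Matrix (Fin d × Bool) (Fin d × Bool) ℂ :=
  Matrix.of fun v u =>
    if u = v then (1 - (x v.1 : ℂ) ^ 2)⁻¹
    else if u = (v.1, !v.2) then -((1 - (x v.1 : ℂ) ^ 2)⁻¹ * av d n x p v) else 0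

lemma snd_ne (v : Fin d × Bool) : (v.1, !v.2) ≠ v := by
  intro h
  have := congrArg Prod.snd h
  simp at this

lemma M_mul_Minv (hne : ∀ j, (1 : ℂ) - (x j : ℂ) ^ 2 ≠ 0) :
    (1 + Nmat d n x p) * Minv d n x p = 1 := by
  ext v u
  rw [Matrix.add_mul, Matrix.one_mul, Matrix.add_apply, Matrix.mul_apply]
  have hsum : ∀ w, Nmat d n x p v w * Minv d n x p w u =
      if w = (v.1, !v.2) then av d n x p v * Minv d n x p (v.1, !v.2) u else 0 := by
    intro w
    by_cases h : w = (v.1, !v.2) <;> simp [Nmat, h]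
  rw [Finset.sum_congr rfl (fun w _ => hsum w), Finset.sum_ite_eq' Finset.univ]
  simp only [Finset.mem_univ, if_true]
  by_cases h1 : u = v
  · subst h1
    have h2 : u ≠ (u.1, !u.2) := (snd_ne d u).symm
    have hx2 : av d n x p u * av d n x p (u.1, !u.2) = (x u.1 : ℂ) ^ 2 := by
      simpa using av_mul_av_swap d n x p u.1 u.2
    simp only [Minv, Matrix.of_apply, Matrix.one_apply_eq, if_pos rfl, if_neg h2,
      Bool.not_not, Prod.mk.eta, if_true]
    have hrw : av d n x p u * -((1 - (x u.1 : ℂ) ^ 2)⁻¹ * av d n x p (u.1, !u.2)) =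
        -((1 - (x u.1 : ℂ) ^ 2)⁻¹ * (x u.1 : ℂ) ^ 2) := by
      rw [← hx2]; ring
    rw [hrw]
    field_simp
    rw [div_eq_one_iff_eq (hne u.1)]
    ring
  · by_cases h2 : u = (v.1, !v.2)
    · subst h2
      have h3 : (v.1, !v.2) ≠ v := snd_ne d v
      simp only [Minv, Matrix.of_apply, if_pos rfl, if_neg h3, Bool.not_not, Prod.mk.eta,
        if_true, Matrix.one_apply_ne (Ne.symm h3)]
      ring
    · simp only [Minv, Matrix.of_apply, if_neg h1, if_neg h2, Bool.not_not, Prod.mk.eta,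
        Matrix.one_apply_ne (Ne.symm h1)]
      ring

lemma one_add_Nmat_eq :
    (1 + Nmat d n x p) =
      (Matrix.blockDiagonal (fun j => Matrix.of fun s t : Bool =>
          if t = s then 1 else av d n x p (j, s))).submatrix
        (Equiv.prodComm (Fin d) Bool) (Equiv.prodComm (Fin d) Bool) := by
  ext ⟨j, s⟩ ⟨k, t⟩
  simp only [Matrix.add_apply, Matrix.one_apply, Nmat, Matrix.of_apply, Matrix.submatrix_apply,
    Equiv.prodComm_apply, Prod.swap_prod_mk, Matrix.blockDiagonal_apply, Prod.mk.injEq]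
  by_cases hjk : j = k
  · subst hjk
    cases s <;> cases t <;> simp
  · simp [hjk, Ne.symm hjk]

lemma det_one_add_Nmat :
    Matrix.det (1 + Nmat d n x p) = ∏ j, ((1 : ℂ) - (x j : ℂ) ^ 2) := by
  rw [one_add_Nmat_eq, Matrix.det_submatrix_equiv_self, Matrix.det_blockDiagonal]
  refine Finset.prod_congr rfl fun j _ => ?_
  rw [← Matrix.det_submatrix_equiv_self finTwoEquiv, Matrix.det_fin_two]
  have h := av_mul_av_swap d n x p j false
  simp only [Bool.not_false] at h
  simp [finTwoEquiv, h]

end BlockDetAux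

/-- **Block determinant on the torus** (Lemma 5.1 / `lem:blockdet`).
For every `d ≥ 1`, `n ≥ 1`, every momentum `p ∈ 𝒢^d_n` and translation-invariant
weights `x = (x_1, …, x_d)` with `x_i ≠ ±1`:
`det(Id - Λ̂^d_n(p)) = [1 + 2 Σ_i x_i (x_i - cos(2π p_i/n))/(1 - x_i²)] ∏_i (1 - x_i²)`. -/
theorem det_one_sub_hatLambda (d n : ℕ) (hd : 1 ≤ d) (hn : 1 ≤ n)
    (x : Fin d → ℝ) (hx : ∀ i, x i ≠ 1 ∧ x i ≠ -1) (p : Fin d → Fin n) :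
    Matrix.det (1 - hatLambda d n x p) =
      (((1 + 2 * ∑ i, x i * (x i - Real.cos (2 * Real.pi * ((p i : ℕ) : ℝ) / (n : ℝ))) /
            (1 - x i ^ 2) : ℝ)) : ℂ) *
        ∏ i, (((1 - x i ^ 2 : ℝ)) : ℂ) := by
  classical
  have hne : ∀ j, (1 : ℂ) - (x j : ℂ) ^ 2 ≠ 0 := by
    intro j
    have h1 : (1 : ℝ) - x j ^ 2 ≠ 0 := by
      intro h
      have h2 : (1 - x j) * (1 + x j) = 0 := by linear_combination h
      rcases mul_eq_zero.mp h2 with h3 | h3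
      · exact (hx j).1 (by linarith)
      · exact (hx j).2 (by linarith)
    intro h
    apply h1
    have : ((1 - x j ^ 2 : ℝ) : ℂ) = 0 := by push_cast; linear_combination h
    exact_mod_cast this
  have hvσ : ∀ v : Fin d × Bool, v ≠ (v.1, !v.2) := fun v => (BlockDetAux.snd_ne d v).symm
  -- Step 1 : 1 - Λ̂ = (1 + N) - a ⊗ 1
  have key1 : (1 : Matrix (Fin d × Bool) (Fin d × Bool) ℂ) - hatLambda d n x p =
      (1 + BlockDetAux.Nmat d n x p) -
        Matrix.vecMulVec (BlockDetAux.av d n x p) (fun _ => 1) := by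
    ext v u
    simp only [Matrix.sub_apply, Matrix.add_apply, BlockDetAux.Nmat, Matrix.of_apply,
      Matrix.vecMulVec_apply, hatLambda]
    by_cases h : u = (v.1, !v.2)
    · have h2 : v ≠ u := fun hh => hvσ v (hh.trans h)
      rw [if_pos h, if_pos h, Matrix.one_apply_ne h2]
      ring
    · rw [if_neg h, if_neg h]
      show (1 : Matrix (Fin d × Bool) (Fin d × Bool) ℂ) v u - BlockDetAux.av d n x p v =
        ((1 : Matrix (Fin d × Bool) (Fin d × Bool) ℂ) v u + 0) -
          BlockDetAux.av d n x p v * 1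
      ring
  -- Step 2 : factor out (1 + N)
  have key2 : (1 : Matrix (Fin d × Bool) (Fin d × Bool) ℂ) - hatLambda d n x p =
      (1 + BlockDetAux.Nmat d n x p) *
        (1 - BlockDetAux.Minv d n x p *
          Matrix.vecMulVec (BlockDetAux.av d n x p) (fun _ => 1)) := by
    rw [key1, Matrix.mul_sub, Matrix.mul_one, ← Matrix.mul_assoc,
      BlockDetAux.M_mul_Minv d n x p hne, Matrix.one_mul]
  -- Step 3 : the rank-one part
  have hMC : BlockDetAux.Minv d n x p *
        Matrix.vecMulVec (BlockDetAux.av d n x p) (fun _ : Fin d × Bool => (1 : ℂ)) =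
      Matrix.vecMulVec (BlockDetAux.Minv d n x p *ᵥ BlockDetAux.av d n x p)
        (fun _ : Fin d × Bool => (1 : ℂ)) := by
    ext v u
    simp [Matrix.mul_apply, Matrix.vecMulVec_apply, Matrix.mulVec, dotProduct,
      Finset.sum_mul]
  have hsub : ∀ w : Fin d × Bool → ℂ,
      (1 : Matrix (Fin d × Bool) (Fin d × Bool) ℂ) -
          Matrix.vecMulVec w (fun _ : Fin d × Bool => (1 : ℂ)) =
        1 + Matrix.replicateCol Unit (-w) * Matrix.replicateRow Unit (fun _ : Fin d × Bool => (1 : ℂ)) := by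
    intro w
    rw [← Matrix.vecMulVec_eq Unit]
    ext v u
    simp [Matrix.vecMulVec_apply, sub_eq_add_neg]
  -- Step 4 : the vector M⁻¹ a
  have hw : ∀ v : Fin d × Bool,
      (BlockDetAux.Minv d n x p *ᵥ BlockDetAux.av d n x p) v =
        (1 - (x v.1 : ℂ) ^ 2)⁻¹ * (BlockDetAux.av d n x p v - (x v.1 : ℂ) ^ 2) := by
    intro v
    have hterm : ∀ u, BlockDetAux.Minv d n x p v u * BlockDetAux.av d n x p u =
        (if u = v then (1 - (x v.1 : ℂ) ^ 2)⁻¹ * BlockDetAux.av d n x p v else 0) +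
        (if u = (v.1, !v.2) then
          -((1 - (x v.1 : ℂ) ^ 2)⁻¹ * BlockDetAux.av d n x p v) * BlockDetAux.av d n x p u
          else 0) := by
      intro u
      by_cases h1 : u = v
      · subst h1
        have h2 : u ≠ (u.1, !u.2) := hvσ u
        simp [BlockDetAux.Minv, h2]
      · by_cases h2 : u = (v.1, !v.2) <;> simp [BlockDetAux.Minv, h1, h2, Ne.symm (hvσ v)]
    rw [Matrix.mulVec, dotProduct, Finset.sum_congr rfl (fun u _ => hterm u),
      Finset.sum_add_distrib, Finset.sum_ite_eq' Finset.univ, Finset.sum_ite_eq' Finset.univ]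
    simp only [Finset.mem_univ, if_true]
    have hx2 : BlockDetAux.av d n x p v * BlockDetAux.av d n x p (v.1, !v.2) =
        (x v.1 : ℂ) ^ 2 := by
      simpa using BlockDetAux.av_mul_av_swap d n x p v.1 v.2
    linear_combination (-(1 - (x v.1 : ℂ) ^ 2)⁻¹) * hx2
  -- Step 5 : put it together
  rw [key2, Matrix.det_mul, BlockDetAux.det_one_add_Nmat, hMC, hsub,
    Matrix.det_one_add_replicateCol_mul_replicateRow]
  have hprod : ∏ j, ((1 : ℂ) - (x j : ℂ) ^ 2) = ∏ i, (((1 - x i ^ 2 : ℝ)) : ℂ) := by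
    refine Finset.prod_congr rfl fun j _ => ?_
    push_cast
    ring
  have hdot : (1 : ℂ) + (fun _ : Fin d × Bool => (1 : ℂ)) ⬝ᵥ
      -(BlockDetAux.Minv d n x p *ᵥ BlockDetAux.av d n x p) =
      (((1 + 2 * ∑ i, x i * (x i - Real.cos (2 * Real.pi * ((p i : ℕ) : ℝ) / (n : ℝ))) /
          (1 - x i ^ 2) : ℝ)) : ℂ) := by
    push_cast [Complex.ofReal_cos]
    rw [dotProduct]
    simp only [Pi.neg_apply, hw, one_mul, BlockDetAux.av]
    rw [Fintype.sum_prod_type]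
    simp only [Fintype.sum_bool, if_true, if_false, Bool.cond_true, Bool.cond_false]
    rw [Finset.mul_sum]
    rw [add_right_inj]
    refine Finset.sum_congr rfl fun j _ => ?_
    have e1 : Complex.exp (2 * (Real.pi : ℂ) * Complex.I * ((p j : ℕ) : ℂ) * 1 / (n : ℂ)) =
        Complex.exp (2 * (Real.pi : ℂ) * ((p j : ℕ) : ℂ) / (n : ℂ) * Complex.I) := by
      congr 1
      ring
    have e2 : Complex.exp ((2 * (Real.pi : ℂ) * Complex.I * ((p j : ℕ) : ℂ) *
          if false = true then 1 else -1) / (n : ℂ)) =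
        Complex.exp (-(2 * (Real.pi : ℂ) * ((p j : ℕ) : ℂ) / (n : ℂ)) * Complex.I) := by
      congr 1
      rw [if_neg (by decide)]
      ring
    rw [e1, e2]
    simp only [Complex.cos]
    field_simp [hne j]
    ring
  rw [hdot, hprod]
  ring

end
end

section
/- Spectrum of the Fourier blocks: For the homogeneous model on 𝒢^d_n (all weights equal to x > 0) and every p ∈ 𝒢^d_n, the eigenvalues of the 2d×2d matrix Λ̂^d_n(p) are x and −x, each with multiplicity d−1, and the two roots of t² − 2·a_p·x·t + (2d−1)·x² = 0, namely x·(2d−1)/(a_p ± √(a_p² − 2d + 1)), each with multiplicity 1, where a_p = Σ_{i=1}^d cos(2πp_i/n); equivalently, the characteristic polynomial of Λ̂^d_n(p) is (t−x)^{d−1}·(t+x)^{d−1}·(t² − 2·a_p·x·t + (2d−1)·x²). -/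
/-!
With all weights equal to `x`, `Λ̂(p) = x • (e 1ᵀ - F)`, where `e v = exp((2πi/n) p·v)` and `F`
is the flip `v ↦ -v` twisted by `e`. Because `e v * e (-v) = 1`, we have `F * F = 1` and
`F *ᵥ e = 1`. Hence `t • 1 + x • F` is inverted by `(t² - x²)⁻¹ • (t • 1 - x • F)` and, being
block diagonal with `2 × 2` blocks, has determinant `(t² - x²)^d`. The matrix determinant lemma
for the rank-one perturbation `-x e 1ᵀ` then produces the quadratic factor. The identity, proved
for `t ≠ ±x`, extends to all `t` by continuity.
-/

noncomputable section

open Matrix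

theorem Matrix.det_add_vecMulVec {m R : Type*} [Fintype m] [DecidableEq m] [CommRing R]
    {A : Matrix m m R} (hA : IsUnit A.det) (u v : m → R) :
    (A + vecMulVec u v).det = A.det * (1 + v ⬝ᵥ A⁻¹ *ᵥ u) := by
  rw [vecMulVec_eq Unit, det_add_replicateCol_mul_replicateRow hA,
    det_unique (1 + replicateRow Unit v * A⁻¹ * replicateCol Unit u), add_apply,
    one_apply_eq, Matrix.mul_assoc, ← replicateCol_mulVec, replicateRow_mul_replicateCol_apply]

section TwistedFlip

variable {R ι : Type*} [CommRing R] [Fintype ι] [DecidableEq ι]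

def twistedFlip (e : ι × Bool → R) : Matrix (ι × Bool) (ι × Bool) R :=
  of fun v u => if u = (v.1, !v.2) then e v else 0

variable {e : ι × Bool → R}

theorem twistedFlip_mul_self (he : ∀ j, e (j, true) * e (j, false) = 1) :
    twistedFlip e * twistedFlip e = 1 := by
  ext ⟨j, s⟩ w
  simp only [mul_apply, twistedFlip, of_apply, ite_mul, zero_mul, Finset.sum_ite_eq',
    Finset.mem_univ, if_true, Bool.not_not, one_apply, eq_comm (a := w)]
  split_ifs <;> cases s <;> simp [he, mul_comm (e (j, false))]

theorem twistedFlip_mulVec_self (he : ∀ j, e (j, true) * e (j, false) = 1) :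
    twistedFlip e *ᵥ e = 1 := by
  ext ⟨j, s⟩
  cases s <;> simp [mulVec, dotProduct, twistedFlip] <;> linear_combination he j

theorem smul_one_add_smul_twistedFlip_mul_sub (he : ∀ j, e (j, true) * e (j, false) = 1)
    (t x : R) :
    (t • 1 + x • twistedFlip e) * (t • 1 - x • twistedFlip e) = (t ^ 2 - x ^ 2) • 1 := by
  simp only [add_mul, mul_sub, smul_mul_smul, Matrix.one_mul, Matrix.mul_one,
    twistedFlip_mul_self he]
  module

theorem det_smul_one_add_smul_twistedFlip (he : ∀ j, e (j, true) * e (j, false) = 1)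
    (t x : R) :
    det (t • 1 + x • twistedFlip e) = (t ^ 2 - x ^ 2) ^ Fintype.card ι := by
  let block : ι → Matrix Bool Bool R := fun j => of fun s r => if r = s then t else x * e (j, s)
  have hblock : t • 1 + x • twistedFlip e =
      (blockDiagonal block).submatrix (Equiv.prodComm ι Bool) (Equiv.prodComm ι Bool) := by
    ext ⟨j, s⟩ ⟨k, r⟩
    simp only [twistedFlip, smul_of, Matrix.add_apply, Matrix.smul_apply, one_apply,
      Prod.mk.injEq, smul_eq_mul, mul_ite, mul_one, mul_zero, of_apply, Pi.smul_apply,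
      Equiv.coe_prodComm, submatrix_apply, Prod.swap_prod_mk, blockDiagonal_apply, block]
    rcases eq_or_ne j k with rfl | hjk
    · cases s <;> cases r <;> simp
    · simp [hjk, hjk.symm]
  have hdet (j : ι) : (block j).det = t ^ 2 - x ^ 2 := by
    rw [← det_submatrix_equiv_self finTwoEquiv, det_fin_two]
    simp only [finTwoEquiv, Fin.isValue, Equiv.coe_fn_mk, submatrix_apply, Fin.reduceBEq,
      of_apply, ↓reduceIte, BEq.rfl, Bool.true_eq_false, Bool.false_eq_true, block]
    linear_combination (-x ^ 2) * he j
  rw [hblock, det_submatrix_equiv_self, det_blockDiagonal]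
  simp [hdet]

end TwistedFlip

theorem det_smul_one_sub_smul_vecMulVec_sub_twistedFlip {K ι : Type*} [Field K] [Fintype ι]
    [DecidableEq ι] [Nonempty ι] {e : ι × Bool → K}
    (he : ∀ j, e (j, true) * e (j, false) = 1)
    {t x : K} (ht : t ^ 2 - x ^ 2 ≠ 0) :
    det (t • 1 - x • (vecMulVec e 1 - twistedFlip e)) =
      (t ^ 2 - x ^ 2) ^ (Fintype.card ι - 1) *
        (t ^ 2 - x * t * ∑ v, e v + (2 * Fintype.card ι - 1) * x ^ 2) := by
  set A := t • 1 + x • twistedFlip e with hA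
  have hsplit : t • 1 - x • (vecMulVec e 1 - twistedFlip e) = A + vecMulVec (-x • e) 1 := by
    rw [hA, smul_vecMulVec, smul_sub, neg_smul]
    abel
  have hinv : A⁻¹ = (t ^ 2 - x ^ 2)⁻¹ • (t • 1 - x • twistedFlip e) := by
    apply inv_eq_right_inv
    rw [Matrix.mul_smul, smul_one_add_smul_twistedFlip_mul_sub he, smul_smul,
      inv_mul_cancel₀ ht, one_smul]
  have hdetA : A.det = (t ^ 2 - x ^ 2) ^ Fintype.card ι :=
    det_smul_one_add_smul_twistedFlip he t x
  have hquad : 1 ⬝ᵥ A⁻¹ *ᵥ (-x • e) =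
      -x * (t * ∑ v, e v - 2 * Fintype.card ι * x) / (t ^ 2 - x ^ 2) := by
    simp only [hinv, smul_mulVec, sub_mulVec, mulVec_smul, one_mulVec,
      twistedFlip_mulVec_self he]
    simp only [neg_smul, dotProduct_neg, dotProduct_smul, dotProduct_sub,
      one_dotProduct, smul_eq_mul, Pi.one_apply, Finset.sum_const, Finset.card_univ,
      Fintype.card_prod, Fintype.card_bool, nsmul_eq_mul, Nat.cast_mul, Nat.cast_ofNat, mul_one]
    ring
  rw [hsplit, det_add_vecMulVec (by simp [hdetA, ht]), hdetA, hquad,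
    ← pow_sub_one_mul Fintype.card_ne_zero]
  field_simp
  ring

section FourierPhase

variable {d n : ℕ} (p : Fin d → Fin n)

def fourierPhase (v : Fin d × Bool) : ℂ :=
  Complex.exp (2 * Real.pi * Complex.I * ((p v.1 : ℕ) : ℂ) *
    (if v.2 then 1 else -1) / (n : ℂ))

theorem fourierPhase_true_mul_false (j : Fin d) :
    fourierPhase p (j, true) * fourierPhase p (j, false) = 1 := by
  rw [fourierPhase, fourierPhase, ← Complex.exp_add, ← Complex.exp_zero]
  congr 1
  simp only [if_true, Bool.false_eq_true, if_false]
  ring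

theorem sum_fourierPhase :
    ∑ v, fourierPhase p v =
      2 * ((∑ i, Real.cos (2 * Real.pi * ((p i : ℕ) : ℝ) / (n : ℝ)) : ℝ) : ℂ) := by
  rw [Fintype.sum_prod_type, Complex.ofReal_sum, Finset.mul_sum]
  refine Finset.sum_congr rfl fun j _ => ?_
  rw [Fintype.sum_bool, Complex.ofReal_cos, Complex.two_cos, fourierPhase, fourierPhase]
  simp only [if_true, Bool.false_eq_true, if_false]
  push_cast
  ring_nf

theorem hatLambda_const (x : ℝ) :
    hatLambda d n (fun _ => x) p =
      (x : ℂ) • (vecMulVec (fourierPhase p) 1 - twistedFlip (fourierPhase p)) := by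
  ext v u
  change (if u = (v.1, !v.2) then 0 else (x : ℂ) * fourierPhase p v) = _
  simp only [twistedFlip, Matrix.smul_apply, Matrix.sub_apply, vecMulVec_apply, of_apply,
    Pi.one_apply, mul_one, smul_eq_mul]
  split_ifs <;> ring

end FourierPhase

theorem charpoly_hatLambda_general (d n : ℕ) (hd : 1 ≤ d)
    (x : ℝ) (p : Fin d → Fin n) (t : ℂ) :
    Matrix.det (t • (1 : Matrix (Fin d × Bool) (Fin d × Bool) ℂ) -
        hatLambda d n (fun _ => x) p) =
      (t - (x : ℂ)) ^ (d - 1) * (t + (x : ℂ)) ^ (d - 1) *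
        (t ^ 2 -
          2 * ((∑ i, Real.cos (2 * Real.pi * ((p i : ℕ) : ℝ) / (n : ℝ)) : ℝ) : ℂ) *
            (x : ℂ) * t +
          (2 * (d : ℂ) - 1) * (x : ℂ) ^ 2) := by
  have : Nonempty (Fin d) := ⟨⟨0, hd⟩⟩
  suffices key : (fun s : ℂ => det (s • (1 : Matrix (Fin d × Bool) (Fin d × Bool) ℂ) -
        hatLambda d n (fun _ => x) p)) =
      fun s => (s - (x : ℂ)) ^ (d - 1) * (s + (x : ℂ)) ^ (d - 1) *
        (s ^ 2 - 2 * ((∑ i, Real.cos (2 * Real.pi * ((p i : ℕ) : ℝ) / (n : ℝ)) : ℝ) : ℂ) *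
          (x : ℂ) * s + (2 * (d : ℂ) - 1) * (x : ℂ) ^ 2) from congrFun key t
  refine Continuous.ext_on ((Set.toFinite {(x : ℂ), -(x : ℂ)}).countable.dense_compl ℂ)
    (by fun_prop) (by fun_prop) fun s hs => ?_
  have hsx : s ^ 2 - (x : ℂ) ^ 2 ≠ 0 :=
    sub_ne_zero.2 fun h => hs (sq_eq_sq_iff_eq_or_eq_neg.1 h)
  rw [hatLambda_const, det_smul_one_sub_smul_vecMulVec_sub_twistedFlip
    (fourierPhase_true_mul_false p) hsx, sum_fourierPhase, Fintype.card_fin, ← mul_pow]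
  ring

/-- **Spectrum of the Fourier blocks** (Lemma 5.7 / `lem:spectrum`), in the equivalent
characteristic-polynomial form: for the homogeneous model (`x_j ≡ x`), for every
`t : ℂ`,
`det(t·Id - Λ̂^d_n(p)) = (t-x)^{d-1} (t+x)^{d-1} (t² - 2 a_p x t + (2d-1)x²)`,
where `a_p = Σ_i cos(2π p_i / n)`; i.e. the eigenvalues of `Λ̂^d_n(p)` are `±x`, each
with multiplicity `d-1`, and the two roots `x(2d-1)/(a_p ± √(a_p² - 2d + 1))` of the
quadratic factor, each with multiplicity `1`. -/
theorem charpoly_hatLambda (d n : ℕ) (hd : 1 ≤ d) (hn : 1 ≤ n)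
    (x : ℝ) (hx : 0 < x) (p : Fin d → Fin n) (t : ℂ) :
    Matrix.det (t • (1 : Matrix (Fin d × Bool) (Fin d × Bool) ℂ) -
        hatLambda d n (fun _ => x) p) =
      (t - (x : ℂ)) ^ (d - 1) * (t + (x : ℂ)) ^ (d - 1) *
        (t ^ 2 -
          2 * ((∑ i, Real.cos (2 * Real.pi * ((p i : ℕ) : ℝ) / (n : ℝ)) : ℝ) : ℂ) *
            (x : ℂ) * t +
          (2 * (d : ℂ) - 1) * (x : ℂ) ^ 2) :=
  charpoly_hatLambda_general d n hd x p t
end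
end
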